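/- For μ > 0 and a continuous, bounded, nonnegative function i : ℝ → ℝ, define v(h) = ∫_{-∞}^h (1/√(2μ)) e^{√(2μ)(η - h)} i(η) dη + ∫_h^∞ (1/√(2μ)) e^{√(2μ)(h - η)} i(η) dη. Then v is differentiable and |v'(h)| ≤ √(2μ) · v(h) for all h ∈ ℝ. -/

import Mathlib

/-! With `c = √(2μ)`, `c v = L + R`, where `L h = ∫_{η ≤ h} e^{c(η-h)} i η` and
`R h = ∫_{η ≥ h} e^{c(h-η)} i η`. Pulling `e^{∓ch}` out of the integrals and applying the
fundamental theorem of calculus gives `L' = i - c L` and `R' = c R - i`, so `v' = R - L`;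
as `L, R ≥ 0`, `|R - L| ≤ L + R = c v`. -/

open MeasureTheory Set Real

section ImproperFTC

variable {E : Type*} [NormedAddCommGroup E] [NormedSpace ℝ E] [CompleteSpace E] {F : ℝ → E}

theorem hasDerivAt_setIntegral_Iic (hF : Continuous F) (hint : ∀ a, IntegrableOn F (Iic a))
    (b : ℝ) : HasDerivAt (fun h => ∫ x in Iic h, F x) (F b) b := by
  have split : (fun h => ∫ x in Iic h, F x) = fun h => (∫ x in Iic b, F x) + ∫ x in b..h, F x :=
    funext fun h => by rw [← intervalIntegral.integral_Iic_sub_Iic (hint b) (hint h)]; abel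
  rw [split]
  exact (intervalIntegral.integral_hasDerivAt_right (hF.intervalIntegrable _ _)
    (hF.stronglyMeasurableAtFilter _ _) hF.continuousAt).const_add _

theorem hasDerivAt_setIntegral_Ici (hF : Continuous F) (hint : ∀ a, IntegrableOn F (Ici a))
    (b : ℝ) : HasDerivAt (fun h => ∫ x in Ici h, F x) (-F b) b := by
  have split : (fun h => ∫ x in Ici h, F x) = fun h => (∫ x in Ici b, F x) - ∫ x in b..h, F x :=
    funext fun h => by rw [← intervalIntegral.integral_Ici_sub_Ici' (hint b) (hint h)]; abel
  rw [split]
  exact (intervalIntegral.integral_hasDerivAt_right (hF.intervalIntegrable _ _)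
    (hF.stronglyMeasurableAtFilter _ _) hF.continuousAt).const_sub _

end ImproperFTC

section ExpKernel

variable {c M : ℝ} {i : ℝ → ℝ}

theorem integrableOn_exp_mul_mul_Iic (hc : 0 < c) (hi : Continuous i) (hM : ∀ x, ‖i x‖ ≤ M)
    (b : ℝ) : IntegrableOn (fun η => exp (c * η) * i η) (Iic b) :=
  (integrableOn_exp_mul_Iic hc b).mul_bdd hi.aestronglyMeasurable (.of_forall hM)

theorem integrableOn_exp_mul_mul_Ici (hc : c < 0) (hi : Continuous i) (hM : ∀ x, ‖i x‖ ≤ M)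
    (b : ℝ) : IntegrableOn (fun η => exp (c * η) * i η) (Ici b) :=
  (integrableOn_Ici_iff_integrableOn_Ioi).2 <|
    (integrableOn_exp_mul_Ioi hc b).mul_bdd hi.aestronglyMeasurable (.of_forall hM)

noncomputable def expKernelIic (c : ℝ) (i : ℝ → ℝ) (h : ℝ) : ℝ :=
  ∫ η in Iic h, exp (c * (η - h)) * i η

noncomputable def expKernelIci (c : ℝ) (i : ℝ → ℝ) (h : ℝ) : ℝ :=
  ∫ η in Ici h, exp (c * (h - η)) * i η

theorem expKernelIic_eq (c : ℝ) (i : ℝ → ℝ) (h : ℝ) :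
    expKernelIic c i h = exp (-(c * h)) * ∫ η in Iic h, exp (c * η) * i η := by
  rw [expKernelIic, ← integral_const_mul]
  congr 1 with η
  rw [← mul_assoc, ← exp_add]
  ring_nf

theorem expKernelIci_eq (c : ℝ) (i : ℝ → ℝ) (h : ℝ) :
    expKernelIci c i h = exp (c * h) * ∫ η in Ici h, exp (-c * η) * i η := by
  rw [expKernelIci, ← integral_const_mul]
  congr 1 with η
  rw [← mul_assoc, ← exp_add]
  ring_nf

theorem expKernelIic_nonneg (hi : ∀ x, 0 ≤ i x) (h : ℝ) : 0 ≤ expKernelIic c i h :=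
  setIntegral_nonneg measurableSet_Iic fun η _ => mul_nonneg (exp_pos _).le (hi η)

theorem expKernelIci_nonneg (hi : ∀ x, 0 ≤ i x) (h : ℝ) : 0 ≤ expKernelIci c i h :=
  setIntegral_nonneg measurableSet_Ici fun η _ => mul_nonneg (exp_pos _).le (hi η)

theorem hasDerivAt_expKernelIic (hc : 0 < c) (hi : Continuous i) (hM : ∀ x, ‖i x‖ ≤ M)
    (h : ℝ) : HasDerivAt (expKernelIic c i) (i h - c * expKernelIic c i h) h := by
  have hexp : HasDerivAt (fun x => exp (-(c * x))) (exp (-(c * h)) * -c) h := by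
    simpa using ((hasDerivAt_id h).const_mul c).neg.exp
  have hint := hasDerivAt_setIntegral_Iic (by fun_prop)
    (integrableOn_exp_mul_mul_Iic hc hi hM) h
  rw [funext (expKernelIic_eq c i)]
  refine (hexp.mul hint).congr_deriv ?_
  have hinv : exp (-(c * h)) * exp (c * h) = 1 := by rw [← exp_add, neg_add_cancel, exp_zero]
  linear_combination i h * hinv

theorem hasDerivAt_expKernelIci (hc : 0 < c) (hi : Continuous i) (hM : ∀ x, ‖i x‖ ≤ M)
    (h : ℝ) : HasDerivAt (expKernelIci c i) (c * expKernelIci c i h - i h) h := by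
  have hexp : HasDerivAt (fun x => exp (c * x)) (exp (c * h) * c) h := by
    simpa using ((hasDerivAt_id h).const_mul c).exp
  have hint := hasDerivAt_setIntegral_Ici (by fun_prop)
    (integrableOn_exp_mul_mul_Ici (neg_neg_of_pos hc) hi hM) h
  rw [funext (expKernelIci_eq c i)]
  refine (hexp.mul hint).congr_deriv ?_
  have hinv : exp (c * h) * exp (-c * h) = 1 := by
    rw [← exp_add, neg_mul, add_neg_cancel, exp_zero]
  linear_combination -i h * hinv

end ExpKernel

theorem stmt3 (μ : ℝ) (hμ : 0 < μ)
    (i : ℝ → ℝ) (hic : Continuous i) (hipos : ∀ x, 0 ≤ i x)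
    (M : ℝ) (hibdd : ∀ x, i x ≤ M)
    (v : ℝ → ℝ)
    (hv : ∀ h, v h = (∫ η in Set.Iic h,
          (1 / Real.sqrt (2*μ)) * Real.exp (Real.sqrt (2*μ) * (η - h)) * i η)
        + ∫ η in Set.Ici h,
          (1 / Real.sqrt (2*μ)) * Real.exp (Real.sqrt (2*μ) * (h - η)) * i η) :
    Differentiable ℝ v ∧ ∀ h, |deriv v h| ≤ Real.sqrt (2*μ) * v h := by
  set c := Real.sqrt (2*μ)
  have hc : 0 < c := Real.sqrt_pos.2 (by positivity)
  have hM : ∀ x, ‖i x‖ ≤ M := fun x => (Real.norm_of_nonneg (hipos x)).trans_le (hibdd x)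
  have hv' : v = fun h => c⁻¹ * (expKernelIic c i h + expKernelIci c i h) := by
    ext h
    simp only [hv, expKernelIic, expKernelIci, mul_assoc, integral_const_mul, one_div, mul_add]
  have hderiv : ∀ h, HasDerivAt v (expKernelIci c i h - expKernelIic c i h) h := fun h => by
    rw [hv']
    refine (((hasDerivAt_expKernelIic hc hic hM h).add
      (hasDerivAt_expKernelIci hc hic hM h)).const_mul c⁻¹).congr_deriv ?_
    field_simp
    ring
  refine ⟨fun h => (hderiv h).differentiableAt, fun h => ?_⟩
  have hcv : c * v h = expKernelIic c i h + expKernelIci c i h := by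
    rw [hv']
    field_simp
  rw [(hderiv h).deriv, hcv]
  have hleft := expKernelIic_nonneg (c := c) hipos h
  have hright := expKernelIci_nonneg (c := c) hipos h
  exact abs_sub_le_iff.2 ⟨by linarith, by linarith⟩
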